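/- Let r > 0 and let x₀ be a point of Euclidean space ℝ³. Then the integral over all of ℝ³ of the filter weight function x ↦ max(0, 1 − ‖x − x₀‖ / r) with respect to Lebesgue measure equals π r³ / 3. -/

import Mathlib

/-!
The weight is a cone over the ball of radius `r`. After translating `x₀` to the origin, polar
coordinates turn the integral over an `n`-dimensional space into
`n · |B₁| · ∫₀ʳ yⁿ⁻¹ (1 - y / r) dy = |B₁| rⁿ / (n + 1)`: the cone has `1 / (n + 1)` of the volume
of the cylinder over its base. For `n = 3`, `|B₁| = 4π / 3`.
-/

open MeasureTheory Real

lemma setIntegral_Ioi_pow_mul_max_one_sub_div (n : ℕ) {r : ℝ} (hr : 0 < r) :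
    ∫ y in Set.Ioi (0 : ℝ), y ^ n * max 0 (1 - y / r) = r ^ (n + 1) / ((n + 1) * (n + 2)) := by
  have hsupport : Set.EqOn (fun y : ℝ => y ^ n * max 0 (1 - y / r))
      ((Set.Ioc 0 r).indicator fun y => y ^ n - y ^ (n + 1) / r) (Set.Ioi 0) := by
    intro y (hy : 0 < y)
    by_cases hyr : y ≤ r
    · have : 0 ≤ 1 - y / r := sub_nonneg.mpr ((div_le_one hr).mpr hyr)
      rw [Set.indicator_of_mem (Set.mem_Ioc.mpr ⟨hy, hyr⟩)]
      simp only [max_eq_right this]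
      field_simp
      ring
    · have : 1 - y / r ≤ 0 := sub_nonpos.mpr ((le_div_iff₀ hr).mpr (by linarith))
      rw [Set.indicator_of_notMem (fun h => hyr h.2)]
      simp [max_eq_left this]
  rw [setIntegral_congr_fun measurableSet_Ioi hsupport, setIntegral_indicator measurableSet_Ioc,
    Set.inter_eq_right.mpr Set.Ioc_subset_Ioi_self, ← intervalIntegral.integral_of_le hr.le,
    intervalIntegral.integral_sub ((continuous_pow n).intervalIntegrable 0 r)
      (((continuous_pow (n + 1)).div_const r).intervalIntegrable 0 r),
    intervalIntegral.integral_div, integral_pow, integral_pow]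
  simp only [zero_pow (Nat.succ_ne_zero _), sub_zero]
  field_simp
  push_cast
  ring

theorem integral_max_one_sub_norm_sub_div {E : Type*} [NormedAddCommGroup E] [NormedSpace ℝ E]
    [Nontrivial E] [FiniteDimensional ℝ E] [MeasurableSpace E] [BorelSpace E]
    (μ : Measure E) [μ.IsAddHaarMeasure] (x₀ : E) {r : ℝ} (hr : 0 < r) :
    ∫ x, max 0 (1 - ‖x - x₀‖ / r) ∂μ
      = μ.real (Metric.ball 0 1) * r ^ Module.finrank ℝ E / (Module.finrank ℝ E + 1) := by
  rw [integral_sub_right_eq_self (fun x => max 0 (1 - ‖x‖ / r)) x₀,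
    integral_fun_norm_addHaar μ fun y => max 0 (1 - y / r)]
  obtain ⟨k, hk⟩ := Nat.exists_eq_add_one_of_ne_zero (Module.finrank_pos (R := ℝ) (M := E)).ne'
  simp only [smul_eq_mul, nsmul_eq_mul, hk, Nat.add_sub_cancel,
    setIntegral_Ioi_pow_mul_max_one_sub_div k hr]
  push_cast
  field_simp
  ring

/-- The total integral over three-dimensional Euclidean space of the density-filter
weight function `x ↦ max 0 (1 - ‖x - x₀‖ / r)` with filter radius `r > 0` equals
`π r³ / 3`. -/
theorem integral_cone_weight_three_dim (r : ℝ) (hr : 0 < r)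
    (x₀ : EuclideanSpace ℝ (Fin 3)) :
    ∫ x : EuclideanSpace ℝ (Fin 3), max 0 (1 - ‖x - x₀‖ / r) = π * r ^ 3 / 3 := by
  rw [integral_max_one_sub_norm_sub_div volume x₀ hr, measureReal_def,
    EuclideanSpace.volume_ball_fin_three, finrank_euclideanSpace_fin, ENNReal.ofReal_one,
    one_pow, one_mul, ENNReal.toReal_ofReal (by positivity)]
  ring
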